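/- In the ring of symmetric functions Λ⊗Q with power sums p_k and p_k' := (1/k)∑_{d|k} μ(k/d) p_d, the following identity of formal power series in variables t_1, t_2, ... holds: ∏_{k≥1} (1 + t_1^k + t_2^k + ⋯)^{p_k'} = ∑_{I} c_I t^I, where the sum is over multi-indices I = (i_1, i_2, ...) with finitely many nonzero entries, t^I = ∏ t_j^{i_j}, and the coefficient of t^I in the left side, expanded via x^a = exp(a log x), is a well-defined element c_I of Λ⊗Q. In particular for the specialization p_k ↦ ∑_{i=1}^{N} x_i^k (finitely many variables), the coefficient c_{(1,1,...,1)} (k ones) equals the falling factorial p_1(p_1−1)···(p_1−k+1) evaluated at p_1 = x_1+⋯+x_N. -/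

import Mathlib

open ArithmeticFunction MvPowerSeries

variable {ι : Type*} {R : Type*} [CommRing R] [Algebra ℚ R]

/-- The exponential `exp(f) = ∑_{k≥0} f^k/k!` of a multivariate power series `f`
(with zero constant term), defined coefficientwise. -/
noncomputable def mvExp (f : MvPowerSeries ι R) : MvPowerSeries ι R :=
  fun d => ∑ k ∈ Finset.range ((d.sum fun _ n => n) + 1),
    ((k.factorial : ℚ)⁻¹) • (MvPowerSeries.coeff d (f ^ k))

/-- The logarithm `log f = −∑_{k≥1} (1−f)^k/k` of a multivariate power series `f` with
constant term `1`, defined coefficientwise. -/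
noncomputable def mvLog (f : MvPowerSeries ι R) : MvPowerSeries ι R :=
  fun d => ∑ k ∈ Finset.Icc 1 (d.sum fun _ n => n),
    (-(k : ℚ)⁻¹) • (MvPowerSeries.coeff d ((1 - f) ^ k))

/-- The formal power `x^a := exp(a·log x)`. -/
noncomputable def mvPow (a : R) (f : MvPowerSeries ι R) : MvPowerSeries ι R :=
  mvExp ((MvPowerSeries.C a) * mvLog f)

/-- The power sum `p_m = ∑_i x_i^m` in `N` variables. -/
noncomputable def powerSum (N : ℕ) (m : ℕ) : MvPolynomial (Fin N) ℚ :=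
  ∑ i, MvPolynomial.X i ^ m

/-- The Möbius-inverted power sum `p_m' = (1/m) ∑_{d ∣ m} μ(m/d) p_d`. -/
noncomputable def powerSumPrime (N : ℕ) (m : ℕ) : MvPolynomial (Fin N) ℚ :=
  ((m : ℚ)⁻¹) • ∑ d ∈ m.divisors, MvPolynomial.C ((moebius (m / d) : ℤ) : ℚ) * powerSum N d


/-!
Put `E = mvPow a (1 + ∑ j, X j)`. Because `mvExp` and `mvLog` agree with their partial sums in
every fixed degree, they obey the usual differential equations, so `(1 + ∑ j, X j) ∂ᵢE = a E`.
Comparing coefficients of a squarefree monomial `t^S` with `i ∉ S` gives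
`E_{S+i} + ∑_{j ∈ S} E_{S-j+i} = a E_S`, and induction on `|S|` yields
`E_S = a (a - 1) ⋯ (a - |S| + 1)`. For `m ≥ 2` the series `∑ j, X j ^ m` has no squarefree
terms, hence neither do `mvPow a (1 + ∑ j, X j ^ m) - 1` and the product of these factors, which
therefore do not change squarefree coefficients. Finally `p₁' = p₁`.
-/

open Finset

section Coefficients

variable {A : Type*} [CommSemiring A]

lemma degree_add_single_one (d : ι →₀ ℕ) (i : ι) :
    (d + Finsupp.single i 1).degree = d.degree + 1 := by
  rw [map_add, Finsupp.degree_single]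

lemma coeff_pow_eq_zero_of_degree_lt {h : MvPowerSeries ι A} (hh : constantCoeff h = 0)
    {d : ι →₀ ℕ} {n : ℕ} (hd : d.degree < n) : coeff d (h ^ n) = 0 :=
  coeff_of_lt_order <|
    (ENat.natCast_lt_natCast.2 hd).trans_le (le_order_pow_of_constantCoeff_eq_zero n hh)

lemma coeff_mul_congr_right {u f g : MvPowerSeries ι A} {d : ι →₀ ℕ}
    (h : ∀ e ≤ d, coeff e f = coeff e g) : coeff d (u * f) = coeff d (u * g) := by
  classical
  rw [coeff_mul, coeff_mul]
  exact sum_congr rfl fun p hp => by rw [h p.2 (HasAntidiagonal.antidiagonal.snd_le hp)]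

end Coefficients

section PartialSums

variable {h f : MvPowerSeries ι R} {d : ι →₀ ℕ}

lemma coeff_mvExp (h : MvPowerSeries ι R) (d : ι →₀ ℕ) :
    coeff d (mvExp h) = ∑ n ∈ range (d.degree + 1), (n.factorial : ℚ)⁻¹ • coeff d (h ^ n) :=
  rfl

lemma coeff_mvLog (f : MvPowerSeries ι R) (d : ι →₀ ℕ) :
    coeff d (mvLog f) = ∑ n ∈ Icc 1 d.degree, (-(n : ℚ)⁻¹) • coeff d ((1 - f) ^ n) :=
  rfl

lemma constantCoeff_mvExp (h : MvPowerSeries ι R) : constantCoeff (mvExp h) = 1 := by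
  rw [← coeff_zero_eq_constantCoeff_apply, coeff_mvExp]
  simp

lemma constantCoeff_mvLog (f : MvPowerSeries ι R) : constantCoeff (mvLog f) = 0 := by
  rw [← coeff_zero_eq_constantCoeff_apply, coeff_mvLog]
  simp

noncomputable def expPartialSum (K : ℕ) (h : MvPowerSeries ι R) : MvPowerSeries ι R :=
  ∑ n ∈ range K, (n.factorial : ℚ)⁻¹ • h ^ n

noncomputable def logPartialSum (K : ℕ) (f : MvPowerSeries ι R) : MvPowerSeries ι R :=
  ∑ n ∈ Ico 1 K, (-(n : ℚ)⁻¹) • (1 - f) ^ n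

lemma coeff_mvExp_eq_coeff_expPartialSum (hh : constantCoeff h = 0) {K : ℕ}
    (hd : d.degree < K) : coeff d (mvExp h) = coeff d (expPartialSum K h) := by
  rw [coeff_mvExp, expPartialSum, map_sum]
  refine sum_subset (range_subset_range.2 hd) fun n _ hn => ?_
  rw [mem_range, not_lt] at hn
  rw [coeff_pow_eq_zero_of_degree_lt hh (by omega), smul_zero]

lemma coeff_mvLog_eq_coeff_logPartialSum (hf : constantCoeff f = 1) {K : ℕ}
    (hd : d.degree < K) : coeff d (mvLog f) = coeff d (logPartialSum K f) := by
  have hg : constantCoeff (1 - f) = 0 := by rw [map_sub, map_one, hf, sub_self]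
  rw [coeff_mvLog, logPartialSum, map_sum]
  refine sum_subset (fun n hn => ?_) fun n hnK hn => ?_
  · rw [mem_Icc] at hn
    rw [mem_Ico]
    omega
  · rw [mem_Ico] at hnK
    rw [mem_Icc] at hn
    rw [coeff_pow_eq_zero_of_degree_lt hg (by omega), smul_zero]

lemma pderiv_expPartialSum_succ (i : ι) (K : ℕ) (h : MvPowerSeries ι R) :
    pderiv R i (expPartialSum (K + 1) h) = pderiv R i h * expPartialSum K h := by
  rw [expPartialSum, expPartialSum, map_sum, sum_range_succ', mul_sum]
  simp only [pow_zero, Derivation.map_smul_of_tower, Derivation.map_one_eq_zero, smul_zero,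
    add_zero, pderiv_pow]
  refine sum_congr rfl fun n _ => ?_
  rw [add_tsub_cancel_right, ← nsmul_eq_mul, ← Nat.cast_smul_eq_nsmul ℚ, smul_mul_assoc,
    smul_smul, mul_smul_comm, mul_comm (pderiv R i h)]
  congr 1
  rw [Nat.factorial_succ]
  push_cast
  field_simp

lemma pderiv_logPartialSum_succ (i : ι) (K : ℕ) (f : MvPowerSeries ι R) :
    pderiv R i (logPartialSum (K + 1) f) = pderiv R i f * ∑ n ∈ range K, (1 - f) ^ n := by
  rw [logPartialSum, map_sum, sum_Ico_eq_sum_range, add_tsub_cancel_right, mul_sum]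
  refine sum_congr rfl fun n _ => ?_
  rw [Derivation.map_smul_of_tower, pderiv_pow, map_sub, Derivation.map_one_eq_zero,
    add_tsub_cancel_left, ← nsmul_eq_mul, ← Nat.cast_smul_eq_nsmul ℚ, smul_mul_assoc, smul_smul,
    zero_sub, mul_neg, smul_neg, ← neg_smul, neg_mul, neg_neg, inv_mul_cancel₀ (by positivity),
    one_smul, mul_comm]

end PartialSums

theorem pderiv_mvExp {h : MvPowerSeries ι R} (hh : constantCoeff h = 0) (i : ι) :
    pderiv R i (mvExp h) = pderiv R i h * mvExp h := by
  ext d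
  calc coeff d (pderiv R i (mvExp h))
      = coeff d (pderiv R i (expPartialSum (d.degree + 1 + 1) h)) := by
        rw [coeff_pderiv, coeff_pderiv, coeff_mvExp_eq_coeff_expPartialSum hh
          (K := d.degree + 1 + 1) (by rw [degree_add_single_one]; omega)]
    _ = coeff d (pderiv R i h * expPartialSum (d.degree + 1) h) := by
        rw [pderiv_expPartialSum_succ]
    _ = coeff d (pderiv R i h * mvExp h) :=
        coeff_mul_congr_right fun e he => (coeff_mvExp_eq_coeff_expPartialSum hh
          (Nat.lt_succ_of_le (Finsupp.degree_mono he))).symm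

theorem mul_pderiv_mvLog {f : MvPowerSeries ι R} (hf : constantCoeff f = 1) (i : ι) :
    f * pderiv R i (mvLog f) = pderiv R i f := by
  ext d
  have hg : constantCoeff (1 - f) = 0 := by rw [map_sub, map_one, hf, sub_self]
  calc coeff d (f * pderiv R i (mvLog f))
      = coeff d (f * pderiv R i (logPartialSum (d.degree + 1 + 1) f)) :=
        coeff_mul_congr_right fun e he => by
          rw [coeff_pderiv, coeff_pderiv, coeff_mvLog_eq_coeff_logPartialSum hf
            (K := d.degree + 1 + 1)
            (by rw [degree_add_single_one]; have := Finsupp.degree_mono he; omega)]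
    _ = coeff d (pderiv R i f - pderiv R i f * (1 - f) ^ (d.degree + 1)) := by
        have geom := mul_neg_geom_sum (1 - f) (d.degree + 1)
        rw [sub_sub_cancel] at geom
        rw [pderiv_logPartialSum_succ, mul_left_comm, geom, mul_sub, mul_one]
    _ = coeff d (pderiv R i f) := by
        have high : coeff d (pderiv R i f * (1 - f) ^ (d.degree + 1)) = 0 := by
          rw [coeff_mul_congr_right (g := 0) fun e he =>
            coeff_pow_eq_zero_of_degree_lt hg (Nat.lt_succ_of_le (Finsupp.degree_mono he))]
          simp
        rw [map_sub, high, sub_zero]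

theorem mul_pderiv_mvPow (a : R) {f : MvPowerSeries ι R} (hf : constantCoeff f = 1) (i : ι) :
    f * pderiv R i (mvPow a f) = C a * pderiv R i f * mvPow a f := by
  have hc : constantCoeff (C a * mvLog f) = 0 := by rw [map_mul, constantCoeff_mvLog, mul_zero]
  rw [mvPow, pderiv_mvExp hc, Derivation.leibniz, pderiv_C, smul_zero, add_zero, smul_eq_mul,
    ← mul_pderiv_mvLog hf i]
  ring

noncomputable def squarefreeIndex (S : Finset ι) : ι →₀ ℕ := ∑ j ∈ S, Finsupp.single j 1

section SquarefreeIndex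

variable [DecidableEq ι] {A : Type*} [CommSemiring A]

lemma squarefreeIndex_apply (S : Finset ι) (j : ι) :
    squarefreeIndex S j = if j ∈ S then 1 else 0 := by
  simp [squarefreeIndex, Finsupp.finsetSum_apply, Finsupp.single_apply]

lemma squarefreeIndex_insert {S : Finset ι} {i : ι} (hi : i ∉ S) :
    squarefreeIndex (insert i S) = squarefreeIndex S + Finsupp.single i 1 := by
  rw [squarefreeIndex, sum_insert hi, add_comm]
  rfl

lemma coeff_squarefreeIndex_pderiv {S : Finset ι} {i : ι} (hi : i ∉ S) (G : MvPowerSeries ι A) :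
    coeff (squarefreeIndex S) (pderiv A i G) = coeff (squarefreeIndex (insert i S)) G := by
  rw [coeff_pderiv, squarefreeIndex_insert hi, squarefreeIndex_apply, if_neg hi]
  simp

lemma coeff_squarefreeIndex_X_mul (S : Finset ι) (j : ι) (G : MvPowerSeries ι A) :
    coeff (squarefreeIndex S) (X j * G) =
      if j ∈ S then coeff (squarefreeIndex (S.erase j)) G else 0 := by
  rw [X, coeff_monomial_mul, one_mul]
  split_ifs with hle hj hj
  · rw [← insert_erase hj, squarefreeIndex_insert (notMem_erase j S), add_tsub_cancel_right,
      erase_insert_eq_erase, erase_idem]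
  · have := Finsupp.single_le_iff.1 hle
    rw [squarefreeIndex_apply, if_neg hj] at this
    omega
  · rw [Finsupp.single_le_iff, squarefreeIndex_apply, if_pos hj] at hle
    exact absurd le_rfl hle
  · rfl

variable [Fintype ι]

lemma coeff_squarefreeIndex_one_add_sum_X_mul (S : Finset ι) (G : MvPowerSeries ι A) :
    coeff (squarefreeIndex S) ((1 + ∑ j, X j) * G) =
      coeff (squarefreeIndex S) G + ∑ j ∈ S, coeff (squarefreeIndex (S.erase j)) G := by
  simp only [add_mul, one_mul, sum_mul, map_add, map_sum, coeff_squarefreeIndex_X_mul,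
    sum_ite_mem, univ_inter]

lemma pderiv_one_add_sum_X (i : ι) : pderiv A i (1 + ∑ j, X j : MvPowerSeries ι A) = 1 := by
  simp [map_sum, pderiv_X, Pi.single_apply]

end SquarefreeIndex

theorem coeff_squarefreeIndex_mvPow_one_add_sum_X [Fintype ι] [DecidableEq ι] (a : R)
    (S : Finset ι) :
    coeff (squarefreeIndex S) (mvPow a (1 + ∑ j, X j)) = ∏ n ∈ range S.card, (a - n) := by
  set E := mvPow a (1 + ∑ j, X j : MvPowerSeries ι R)
  have step : ∀ T i, i ∉ T → coeff (squarefreeIndex (insert i T)) E +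
      ∑ j ∈ T, coeff (squarefreeIndex (insert i (T.erase j))) E =
        a * coeff (squarefreeIndex T) E := by
    intro T i hi
    have := congrArg (coeff (squarefreeIndex T))
      (mul_pderiv_mvPow a (f := 1 + ∑ j, X j) (by simp) i)
    rw [pderiv_one_add_sum_X, mul_one, coeff_C_mul, coeff_squarefreeIndex_one_add_sum_X_mul,
      coeff_squarefreeIndex_pderiv hi] at this
    rwa [sum_congr rfl fun j _ =>
      coeff_squarefreeIndex_pderiv (fun h => hi (mem_of_mem_erase h)) E] at this
  suffices ∀ n, ∀ S : Finset ι, S.card = n → coeff (squarefreeIndex S) E = ∏ m ∈ range n, (a - m)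
    from this _ S rfl
  intro n
  induction n with
  | zero =>
    intro S hS
    rw [card_eq_zero.1 hS, squarefreeIndex, sum_empty, coeff_zero_eq_constantCoeff_apply,
      prod_range_zero]
    exact constantCoeff_mvExp _
  | succ n ih =>
    intro T hT
    obtain ⟨i, S, hi, rfl, hS⟩ := card_eq_succ.1 hT
    have hcard : ∀ j ∈ S, (insert i (S.erase j)).card = n := fun j hj => by
      rw [card_insert_of_notMem (fun h => hi (mem_of_mem_erase h)), card_erase_of_mem hj, hS]
      have := card_pos.2 ⟨j, hj⟩
      omega
    have := step S i hi
    rw [sum_congr rfl fun j hj => ih _ (hcard j hj), ih S hS, sum_const, hS, nsmul_eq_mul] at this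
    rw [prod_range_succ]
    linear_combination this

lemma Ideal.prod_sub_one_mem {A κ : Type*} [CommRing A] {I : Ideal A} {s : Finset κ}
    {g : κ → A} (h : ∀ m ∈ s, g m - 1 ∈ I) : ∏ m ∈ s, g m - 1 ∈ I := by
  rw [← Ideal.Quotient.eq, map_prod, map_one]
  exact prod_eq_one fun m hm => by
    rw [← map_one (Ideal.Quotient.mk I)]
    exact Ideal.Quotient.eq.2 (h m hm)

section VanishingIdeal

variable {D : Set (ι →₀ ℕ)} (hD : IsLowerSet D)

def coeffVanishingIdeal (A : Type*) [CommSemiring A] : Ideal (MvPowerSeries ι A) where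
  carrier := {f | ∀ e ∈ D, coeff e f = 0}
  add_mem' hf hg e he := by rw [map_add, hf e he, hg e he, add_zero]
  zero_mem' e _ := map_zero _
  smul_mem' u f hf e he := by
    classical
    rw [smul_eq_mul, coeff_mul]
    exact sum_eq_zero fun p hp => by
      rw [hf p.2 (hD (HasAntidiagonal.antidiagonal.snd_le hp) he), mul_zero]

lemma coeff_mul_of_sub_one_mem_coeffVanishingIdeal {A : Type*} [CommRing A] {e : ι →₀ ℕ}
    (he : e ∈ D) (f : MvPowerSeries ι A) {g : MvPowerSeries ι A}
    (hg : g - 1 ∈ coeffVanishingIdeal hD A) : coeff e (f * g) = coeff e f := by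
  have := Ideal.mul_mem_left _ f hg e he
  rwa [mul_sub, mul_one, map_sub, sub_eq_zero] at this

lemma mvLog_mem_coeffVanishingIdeal {f : MvPowerSeries ι R}
    (hf : f - 1 ∈ coeffVanishingIdeal hD R) : mvLog f ∈ coeffVanishingIdeal hD R := by
  intro e he
  have hg : 1 - f ∈ coeffVanishingIdeal hD R := by
    rw [← neg_sub]
    exact neg_mem hf
  rw [coeff_mvLog]
  refine sum_eq_zero fun n hn => ?_
  rw [Ideal.pow_mem_of_mem _ hg n (mem_Icc.1 hn).1 e he, smul_zero]

lemma mvExp_sub_one_mem_coeffVanishingIdeal {h : MvPowerSeries ι R}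
    (hh : h ∈ coeffVanishingIdeal hD R) : mvExp h - 1 ∈ coeffVanishingIdeal hD R := by
  intro e he
  rw [map_sub, coeff_mvExp, sum_range_succ', sum_eq_zero fun n _ => by
    rw [Ideal.pow_mem_of_mem _ hh (n + 1) n.succ_pos e he, smul_zero]]
  simp

lemma mvPow_sub_one_mem_coeffVanishingIdeal (a : R) {f : MvPowerSeries ι R}
    (hf : f - 1 ∈ coeffVanishingIdeal hD R) : mvPow a f - 1 ∈ coeffVanishingIdeal hD R :=
  mvExp_sub_one_mem_coeffVanishingIdeal hD <|
    Ideal.mul_mem_left _ _ (mvLog_mem_coeffVanishingIdeal hD hf)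

end VanishingIdeal

def squarefreeIndices : Set (ι →₀ ℕ) := {e | ∀ j, e j ≤ 1}

lemma isLowerSet_squarefreeIndices : IsLowerSet (squarefreeIndices (ι := ι)) :=
  fun _ _ hle he j => (hle j).trans (he j)

lemma squarefreeIndex_mem_squarefreeIndices [DecidableEq ι] (S : Finset ι) :
    squarefreeIndex S ∈ squarefreeIndices := fun j => by
  rw [squarefreeIndex_apply]
  split_ifs <;> omega

lemma sum_X_pow_mem_coeffVanishingIdeal {A : Type*} [CommSemiring A] [Fintype ι] {m : ℕ}
    (hm : 2 ≤ m) :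
    ∑ j, (X j : MvPowerSeries ι A) ^ m ∈ coeffVanishingIdeal isLowerSet_squarefreeIndices A := by
  classical
  refine sum_mem fun j _ e he => ?_
  rw [coeff_X_pow, if_neg]
  rintro rfl
  have := he j
  rw [Finsupp.single_eq_same] at this
  omega

lemma powerSumPrime_one (N : ℕ) : powerSumPrime N 1 = powerSum N 1 := by
  simp [powerSumPrime]

theorem coeff_squarefree_of_prod_pPrime_general (N k : ℕ) (M : ℕ) (hM : 1 ≤ M) :
    MvPowerSeries.coeff
        (Finsupp.equivFunOnFinite.symm fun _ : Fin k => 1)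
        (∏ m ∈ Finset.Icc 1 M,
          mvPow (powerSumPrime N m)
            (1 + ∑ j : Fin k, (MvPowerSeries.X j : MvPowerSeries (Fin k) (MvPolynomial (Fin N) ℚ)) ^ m)) =
      ∏ j ∈ Finset.range k, (powerSum N 1 - MvPolynomial.C (j : ℚ)) := by
  have hall : Finsupp.equivFunOnFinite.symm (fun _ : Fin k => 1) = squarefreeIndex univ := by
    ext j
    simp [squarefreeIndex_apply]
  have higher : ∏ m ∈ Icc 2 M, mvPow (powerSumPrime N m) (1 + ∑ j : Fin k, X j ^ m) - 1 ∈
      coeffVanishingIdeal isLowerSet_squarefreeIndices _ :=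
    Ideal.prod_sub_one_mem fun m hm => mvPow_sub_one_mem_coeffVanishingIdeal _ _ <| by
      rw [add_sub_cancel_left]
      exact sum_X_pow_mem_coeffVanishingIdeal (mem_Icc.1 hm).1
  rw [show Icc 1 M = insert 1 (Icc 2 M) from (insert_Icc_add_one_left_eq_Icc hM).symm,
    prod_insert (by simp), hall, coeff_mul_of_sub_one_mem_coeffVanishingIdeal _
      (squarefreeIndex_mem_squarefreeIndices _) _ higher]
  simp only [pow_one, powerSumPrime_one, coeff_squarefreeIndex_mvPow_one_add_sum_X, card_univ,
    Fintype.card_fin, map_natCast]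

/-- In `Λ⊗ℚ` specialized to `N` variables (`p_m ↦ ∑_{i=1}^{N} x_i^m`), the coefficient
of the squarefree monomial `t_1 t_2 ⋯ t_k` in the product
`∏_{m≥1} (1 + t_1^m + t_2^m + ⋯)^{p_m'}` (expanded via `x^a = exp(a·log x)`; any
truncation `∏_{m=1}^{M}` of the product with `M ≥ 1` has the same such coefficient)
equals the falling factorial `p_1(p_1 − 1)⋯(p_1 − k + 1)`. -/
theorem coeff_squarefree_of_prod_pPrime (N k : ℕ) (hk : 1 ≤ k) (M : ℕ) (hM : 1 ≤ M) :
    MvPowerSeries.coeff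
        (Finsupp.equivFunOnFinite.symm fun _ : Fin k => 1)
        (∏ m ∈ Finset.Icc 1 M,
          mvPow (powerSumPrime N m)
            (1 + ∑ j : Fin k, (MvPowerSeries.X j : MvPowerSeries (Fin k) (MvPolynomial (Fin N) ℚ)) ^ m)) =
      ∏ j ∈ Finset.range k, (powerSum N 1 - MvPolynomial.C (j : ℚ)) :=
  coeff_squarefree_of_prod_pPrime_general N k M hM
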